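/- Let F be a finite field with q = p^n elements and T = Tr(F) the ring of 2×2 upper triangular matrices over F. Then the commuting graph Γ(T) has exactly (1/2)·q·(q^2 − 1)·(q^2 − q − 1) edges. -/

import Mathlib

open Matrix

/-! An upper triangular matrix `A = [a, b; 0, c]` over a field is central iff it is scalar, and
for a non-scalar `A` the matrices commuting with `A` form a plane (they are the `x + y A`), so
`q ^ 2` of them. Hence every vertex of the commuting graph of `Tri F` has degree
`q ^ 2 - q - 1` (remove the `q` scalars and the vertex itself), there are `q ^ 3 - q` vertices,
and the handshake lemma gives `2 |E| = (q ^ 3 - q) (q ^ 2 - q - 1)`. -/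

/-- The ring of 2×2 upper triangular matrices over `R`. -/
def Tri (R : Type*) [CommRing R] : Subring (Matrix (Fin 2) (Fin 2) R) where
  carrier := {A | A 1 0 = 0}
  mul_mem' := by
    intro a b ha hb
    simp only [Set.mem_setOf_eq] at *
    simp [Matrix.mul_apply, Fin.sum_univ_two, ha, hb]
  one_mem' := by simp [Matrix.one_apply]
  add_mem' := by
    intro a b ha hb
    simp_all [Matrix.add_apply]
  zero_mem' := by simp
  neg_mem' := by
    intro a ha
    simp_all

/-- The commuting graph of a ring `T`: vertices are the noncentral elements,
two distinct vertices are adjacent iff they commute. -/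
def commGraph (T : Type*) [Ring T] : SimpleGraph {x : T // x ∉ Set.center T} where
  Adj a b := a ≠ b ∧ (a : T) * b = b * a
  symm := by
    constructor
    rintro a b ⟨h1, h2⟩
    exact ⟨h1.symm, h2.symm⟩
  loopless := by constructor; rintro a ⟨h, _⟩; exact h rfl

namespace SimpleGraph

theorem two_mul_card_edgeSet_of_forall_card_neighborSet {V : Type*} [Finite V]
    (G : SimpleGraph V) {d : ℕ} (h : ∀ v, Nat.card (G.neighborSet v) = d) :
    2 * Nat.card G.edgeSet = Nat.card V * d := by
  classical
  have := Fintype.ofFinite V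
  rw [Nat.card_eq_fintype_card (α := G.edgeSet), ← edgeFinset_card,
    ← sum_degrees_eq_twice_card_edges]
  simp [← card_neighborSet_eq_degree, ← Nat.card_eq_fintype_card, h]

end SimpleGraph

section CommGraph

variable {T : Type*} [Ring T]

theorem image_val_neighborSet_commGraph (v : {x : T // x ∉ Set.center T}) :
    Subtype.val '' (commGraph T).neighborSet v =
      Set.centralizer {(v : T)} \ insert (v : T) (Set.center T) := by
  ext B
  simp only [Set.mem_image, SimpleGraph.mem_neighborSet, commGraph, Set.mem_sdiff,
    Set.mem_centralizer_iff, Set.mem_singleton_iff, forall_eq, Set.mem_insert_iff, not_or]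
  constructor
  · rintro ⟨b, ⟨hne, hcomm⟩, rfl⟩
    exact ⟨hcomm, fun h => hne (Subtype.ext h).symm, b.2⟩
  · rintro ⟨hcomm, hne, hB⟩
    exact ⟨⟨B, hB⟩, ⟨fun h => hne (congrArg Subtype.val h).symm, hcomm⟩, rfl⟩

theorem card_neighborSet_commGraph [Finite T] (v : {x : T // x ∉ Set.center T}) :
    Nat.card ((commGraph T).neighborSet v) =
      Nat.card (Set.centralizer {(v : T)}) - Nat.card (Set.center T) - 1 := by
  have hsub : insert (v : T) (Set.center T) ⊆ Set.centralizer {(v : T)} :=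
    Set.insert_subset (by simp [Set.mem_centralizer_iff])
      (Set.center_subset_centralizer _)
  simp only [Nat.card_coe_set_eq]
  rw [← Set.ncard_image_of_injective _ Subtype.val_injective, image_val_neighborSet_commGraph,
    Set.ncard_sdiff hsub, Set.ncard_insert_of_notMem v.2, Nat.sub_sub]

theorem card_vertices_commGraph [Finite T] :
    Nat.card {x : T // x ∉ Set.center T} = Nat.card T - Nat.card (Set.center T) :=
  Set.ncard_compl (Set.center T)

end CommGraph

namespace Tri

section CommRing

variable {R : Type*} [CommRing R]

theorem apply_one_zero (A : Tri R) : (A : Matrix (Fin 2) (Fin 2) R) 1 0 = 0 := A.2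

def mk (a b c : R) : Tri R := ⟨!![a, b; 0, c], rfl⟩

def equivProd : Tri R ≃ R × R × R where
  toFun A := (A.1 0 0, A.1 0 1, A.1 1 1)
  invFun x := mk x.1 x.2.1 x.2.2
  left_inv A := by
    ext i j
    fin_cases i <;> fin_cases j <;> simp [mk, apply_one_zero]
  right_inv x := by simp [mk]

theorem card_eq : Nat.card (Tri R) = Nat.card R ^ 3 := by
  rw [Nat.card_congr equivProd, Nat.card_prod, Nat.card_prod]
  ring

instance [Finite R] : Finite (Tri R) := .of_equiv _ equivProd.symm

theorem mul_comm_iff (A B : Tri R) : A * B = B * A ↔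
    A.1 0 0 * B.1 0 1 + A.1 0 1 * B.1 1 1 = B.1 0 0 * A.1 0 1 + B.1 0 1 * A.1 1 1 := by
  rw [Subtype.ext_iff]
  constructor
  · intro h
    simpa [Matrix.mul_apply, Fin.sum_univ_two] using
      congr_fun (congr_fun (h : (A.1 * B.1 : Matrix _ _ R) = B.1 * A.1) 0) 1
  · intro h
    show (A.1 * B.1 : Matrix _ _ R) = B.1 * A.1
    ext i j
    fin_cases i <;> fin_cases j <;>
      simp [Matrix.mul_apply, Fin.sum_univ_two, apply_one_zero, mul_comm]
    linear_combination h

theorem mem_center_iff (A : Tri R) :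
    A ∈ Set.center (Tri R) ↔ A.1 0 0 = A.1 1 1 ∧ A.1 0 1 = 0 := by
  rw [Semigroup.mem_center_iff]
  constructor
  · intro h
    have h₁ := (mul_comm_iff (mk 0 1 0) A).mp (h _)
    have h₂ := (mul_comm_iff (mk 1 0 0) A).mp (h _)
    simp [mk] at h₁ h₂
    exact ⟨h₁.symm, h₂⟩
  · rintro ⟨h₁, h₂⟩ B
    rw [mul_comm_iff, h₂, ← h₁]
    ring

def centerEquiv : Set.center (Tri R) ≃ R where
  toFun A := A.1.1 0 0
  invFun a := ⟨mk a 0 a, by simp [mem_center_iff, mk]⟩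
  left_inv A := by
    obtain ⟨h₁, h₂⟩ := (mem_center_iff A.1).mp A.2
    ext i j
    fin_cases i <;> fin_cases j <;> simp [mk, apply_one_zero, h₁, h₂]
  right_inv a := by simp [mk]

theorem card_center : Nat.card (Set.center (Tri R)) = Nat.card R :=
  Nat.card_congr centerEquiv

end CommRing

section Field

variable {F : Type*} [Field F]

theorem mem_centralizer_singleton_iff (A B : Tri F) : B ∈ Set.centralizer {A} ↔
    A.1 0 0 * B.1 0 1 + A.1 0 1 * B.1 1 1 = B.1 0 0 * A.1 0 1 + B.1 0 1 * A.1 1 1 := by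
  simp only [Set.mem_centralizer_iff, Set.mem_singleton_iff, forall_eq, mul_comm_iff]

/-- With distinct diagonal entries, a commuting matrix is determined by its diagonal. -/
def centralizerEquivOfDiagNe (A : Tri F) (h : A.1 0 0 ≠ A.1 1 1) :
    Set.centralizer {A} ≃ F × F where
  toFun B := (B.1.1 0 0, B.1.1 1 1)
  invFun x := ⟨mk x.1 (A.1 0 1 * (x.1 - x.2) / (A.1 0 0 - A.1 1 1)) x.2, by
    rw [mem_centralizer_singleton_iff]
    simp [mk]
    field_simp [sub_ne_zero.mpr h]
    ring⟩
  left_inv B := by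
    have hB := (mem_centralizer_singleton_iff A B.1).mp B.2
    ext i j
    fin_cases i <;> fin_cases j <;> simp [mk, apply_one_zero]
    field_simp [sub_ne_zero.mpr h]
    linear_combination -hB
  right_inv x := by simp [mk]

/-- With equal diagonal entries and `A 0 1 ≠ 0`, a commuting matrix has scalar diagonal. -/
def centralizerEquivOfDiagEq (A : Tri F) (h : A.1 0 0 = A.1 1 1) (hA : A.1 0 1 ≠ 0) :
    Set.centralizer {A} ≃ F × F where
  toFun B := (B.1.1 0 0, B.1.1 0 1)
  invFun x := ⟨mk x.1 x.2 x.1, by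
    rw [mem_centralizer_singleton_iff]
    simp [mk, ← h]
    ring⟩
  left_inv B := by
    have hB := (mem_centralizer_singleton_iff A B.1).mp B.2
    have hdiag : B.1.1 1 1 = B.1.1 0 0 := by
      have : A.1 0 1 * (B.1.1 1 1 - B.1.1 0 0) = 0 := by rw [← h] at hB; linear_combination hB
      exact sub_eq_zero.mp ((mul_eq_zero.mp this).resolve_left hA)
    ext i j
    fin_cases i <;> fin_cases j <;> simp [mk, apply_one_zero, hdiag]
  right_inv x := by simp [mk]

theorem card_centralizer_singleton {A : Tri F} (hA : A ∉ Set.center (Tri F)) :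
    Nat.card (Set.centralizer {A}) = Nat.card F ^ 2 := by
  rw [mem_center_iff, not_and_or] at hA
  by_cases h : A.1 0 0 = A.1 1 1
  · rw [Nat.card_congr (centralizerEquivOfDiagEq A h (hA.resolve_left (not_not.mpr h))),
      Nat.card_prod, sq]
  · rw [Nat.card_congr (centralizerEquivOfDiagNe A h), Nat.card_prod, sq]

end Field

end Tri

theorem card_edges_commGraph_tri_field_general {F : Type*} [Field F] [Fintype F]
    (p n : ℕ) (hq : Fintype.card F = p ^ n) :
    2 * Nat.card (commGraph (Tri F)).edgeSet =
      p ^ n * ((p ^ n) ^ 2 - 1) * ((p ^ n) ^ 2 - p ^ n - 1) := by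
  rw [← hq, ← Nat.card_eq_fintype_card]
  have hdeg (v : {x : Tri F // x ∉ Set.center (Tri F)}) :
      Nat.card ((commGraph (Tri F)).neighborSet v) = Nat.card F ^ 2 - Nat.card F - 1 := by
    rw [card_neighborSet_commGraph, Tri.card_centralizer_singleton v.2, Tri.card_center]
  rw [SimpleGraph.two_mul_card_edgeSet_of_forall_card_neighborSet _ hdeg,
    card_vertices_commGraph, Tri.card_eq, Tri.card_center]
  congr 1
  rw [Nat.mul_sub_one, ← pow_succ']

/-- Corollary 2.3: for a finite field `F` of order `q = p^n`, the commuting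
graph of `Tri F` has `(1/2) q (q^2 - 1) (q^2 - q - 1)` edges, i.e. twice the
number of edges is `q (q^2 - 1) (q^2 - q - 1)`. -/
theorem card_edges_commGraph_tri_field {F : Type*} [Field F] [Fintype F]
    (p n : ℕ) (hp : p.Prime) (hn : 1 ≤ n) (hq : Fintype.card F = p ^ n) :
    2 * Nat.card (commGraph (Tri F)).edgeSet =
      p ^ n * ((p ^ n) ^ 2 - 1) * ((p ^ n) ^ 2 - p ^ n - 1) :=
  card_edges_commGraph_tri_field_general p n hq
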